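/- Let A(ξ) = e^{−ξ} J_ν(e^{−ξ}) and B(ξ) = e^{−2ξ} J_ν'(e^{−ξ}). Then A and B satisfy the first-order system A' = −A − B, B' = (e^{−2ξ} − ν²)A − B, and consequently (A(ξ)B(η) − A(η)B(ξ))/(e^{−2ξ} − e^{−2η}) = ∫_0^∞ A(ξ+u) A(η+u) du for all ξ ≠ η. -/

import Mathlib

/-!
Write `J_ν(x) = (x/2)^ν g(x²/4)` with `g(t) = ∑ (-1)^k t^k / (k! Γ(ν+k+1))` entire, and put
`τ = e^{-2ξ}/4`. Then `A = e^{-(1+ν)ξ} g(τ) / 2^ν` and `B = νA + 2τ e^{-(1+ν)ξ} g'(τ) / 2^ν`,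
so the first-order system is the chain rule combined with `t g'' + (ν+1) g' + g = 0`, which is
the recursion `(k+1)(ν+k+1) c_{k+1} = -c_k` between the coefficients of `g`.

The system makes `W(u) = e^{2u} (A(ξ+u) B(η+u) - A(η+u) B(ξ+u))` satisfy
`W' = (e^{-2η} - e^{-2ξ}) A(ξ+u) A(η+u)`. Since `A = O(e^{-(1+ν)ξ})` and
`B - νA = O(e^{-(3+ν)ξ})` (the `ν`-parts cancel in `W`), `W(u) = O(e^{-(2+2ν)u})`, and
integrating `W'` over `(0, ∞)` gives `-W(0)`, which is the identity.
-/

open MeasureTheory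

/-- The Bessel function of the first kind of order ν, defined by its power series. -/
noncomputable def besselJ (ν x : ℝ) : ℝ :=
  ∑' k : ℕ, ((-1 : ℝ) ^ k / (k.factorial * Real.Gamma (ν + k + 1))) * (x / 2) ^ (ν + 2 * k)

open Filter Asymptotics FormalMultilinearSeries Real Set
open scoped Topology Nat

section PowerSeries

variable {𝕜 : Type*} [RCLike 𝕜]

def derivCoeff (a : ℕ → 𝕜) (n : ℕ) : 𝕜 := (n + 1) * a (n + 1)

variable {a : ℕ → 𝕜}

theorem hasSum_ofScalarsSum_of_radius_eq_top (ha : (ofScalars 𝕜 a).radius = ⊤) (t : 𝕜) :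
    HasSum (fun n => a n * t ^ n) (ofScalarsSum a t) := by
  simpa [ofScalarsSum, ofScalars_apply_eq, mul_comm] using
    (ofScalars 𝕜 a).hasSum (x := t) (by simp [ha])

theorem radius_ofScalars_eq_top_of_summable (ha : ∀ t : 𝕜, Summable fun n => a n * t ^ n) :
    (ofScalars 𝕜 a).radius = ⊤ := by
  refine radius_eq_top_of_forall_nnreal_isBigO _ fun r => ?_
  have h := (ha ((r : ℝ) : 𝕜)).tendsto_atTop_zero.norm.isBigO_one ℝ
  simpa [ofScalars_norm] using h

theorem hasSum_deriv_ofScalarsSum (ha : (ofScalars 𝕜 a).radius = ⊤) (t : 𝕜) :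
    HasSum (fun n => derivCoeff a n * t ^ n) (deriv (ofScalarsSum a) t) := by
  have hp := ((ofScalars 𝕜 a).hasFPowerSeriesOnBall (by simp [ha])).fderiv
  have h := (hp.hasSum (y := t) (by simp [ha])).mapL (ContinuousLinearMap.apply 𝕜 𝕜 1)
  simpa [derivCoeff, apply_eq_pow_smul_coeff, coeff_ofScalars, ofScalarsSum, mul_comm,
    mul_left_comm] using h

theorem radius_ofScalars_derivCoeff (ha : (ofScalars 𝕜 a).radius = ⊤) :
    (ofScalars 𝕜 (derivCoeff a)).radius = ⊤ :=
  radius_ofScalars_eq_top_of_summable fun t => (hasSum_deriv_ofScalarsSum ha t).summable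

theorem hasDerivAt_ofScalarsSum (ha : (ofScalars 𝕜 a).radius = ⊤) (t : 𝕜) :
    HasDerivAt (ofScalarsSum a) (ofScalarsSum (derivCoeff a) t) t := by
  have hd : DifferentiableAt 𝕜 (ofScalarsSum a) t :=
    (((ofScalars 𝕜 a).hasFPowerSeriesOnBall (by simp [ha])).analyticAt_of_mem
      (by simp [ha])).differentiableAt
  rw [← (hasSum_deriv_ofScalarsSum ha t).unique
    (hasSum_ofScalarsSum_of_radius_eq_top (radius_ofScalars_derivCoeff ha) t)]
  exact hd.hasDerivAt

theorem deriv_ofScalarsSum (ha : (ofScalars 𝕜 a).radius = ⊤) :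
    deriv (ofScalarsSum a) = ofScalarsSum (E := 𝕜) (derivCoeff a) :=
  funext fun t => (hasDerivAt_ofScalarsSum ha t).deriv

theorem differentiable_ofScalarsSum (ha : (ofScalars 𝕜 a).radius = ⊤) :
    Differentiable 𝕜 (ofScalarsSum (E := 𝕜) a) :=
  fun t => (hasDerivAt_ofScalarsSum ha t).differentiableAt

end PowerSeries

theorem isBigO_exp_comp_const_add {f : ℝ → ℝ} {c : ℝ} (hf : f =O[atTop] fun x => exp (c * x))
    (s : ℝ) : (fun u => f (s + u)) =O[atTop] fun u => exp (c * u) := by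
  refine (hf.comp_tendsto (tendsto_atTop_add_const_left _ s tendsto_id)).trans ?_
  refine (isBigO_const_mul_self (exp (c * s)) (fun u => exp (c * u)) atTop).congr_left
    fun u => ?_
  simp only [Function.comp_apply, id_eq, ← exp_add]
  ring_nf

section Wronskian

variable {ν : ℝ} {A B : ℝ → ℝ}
  (hA : ∀ ξ, HasDerivAt A (-A ξ - B ξ) ξ)
  (hB : ∀ ξ, HasDerivAt B ((exp (-2 * ξ) - ν ^ 2) * A ξ - B ξ) ξ)
include hA hB

theorem hasDerivAt_exp_mul_wronskian (ξ η u : ℝ) :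
    HasDerivAt (fun u => exp (2 * u) * (A (ξ + u) * B (η + u) - A (η + u) * B (ξ + u)))
      ((exp (-2 * η) - exp (-2 * ξ)) * (A (ξ + u) * A (η + u))) u := by
  have hshift : ∀ s, HasDerivAt (fun u => s + u) 1 u := fun s => (hasDerivAt_id u).const_add s
  have hAs := fun s => (hA (s + u)).comp u (hshift s)
  have hBs := fun s => (hB (s + u)).comp u (hshift s)
  have hexp := ((hasDerivAt_id' u).const_mul 2).exp
  refine (hexp.mul (((hAs ξ).mul (hBs η)).sub ((hAs η).mul (hBs ξ)))).congr_deriv ?_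
  have e : ∀ s, exp (-2 * (s + u)) = exp (-2 * s) * exp (-2 * u) := fun s => by
    rw [← exp_add]; ring_nf
  have e2 : exp (2 * u) * exp (-2 * u) = 1 := by rw [← exp_add]; simp
  simp only [Function.comp_apply, Pi.sub_apply, Pi.mul_apply, e ξ, e η]
  linear_combination (exp (-2 * η) - exp (-2 * ξ)) * A (ξ + u) * A (η + u) * e2

theorem wronskian_div_eq_integral (hν : -1 < ν)
    (hAO : A =O[atTop] fun ξ => exp (-(1 + ν) * ξ))
    (hBO : (fun ξ => B ξ - ν * A ξ) =O[atTop] fun ξ => exp (-(3 + ν) * ξ))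
    {ξ η : ℝ} (hξη : ξ ≠ η) :
    (A ξ * B η - A η * B ξ) / (exp (-2 * ξ) - exp (-2 * η))
      = ∫ u in Ioi 0, A (ξ + u) * A (η + u) := by
  have hdecay : ∀ u, exp (2 * u) * (exp (-(1 + ν) * u) * exp (-(3 + ν) * u))
      = exp (-(2 + 2 * ν) * u) := fun u => by
    rw [← exp_add, ← exp_add]; ring_nf
  have hW : Tendsto (fun u => exp (2 * u) * (A (ξ + u) * B (η + u) - A (η + u) * B (ξ + u)))
      atTop (𝓝 0) := by
    have hO := (isBigO_refl (fun u => exp (2 * u)) atTop).mul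
      (((isBigO_exp_comp_const_add hAO ξ).mul (isBigO_exp_comp_const_add hBO η)).sub
        ((isBigO_exp_comp_const_add hAO η).mul (isBigO_exp_comp_const_add hBO ξ)))
    refine (hO.congr (fun u => by ring) hdecay).trans_tendsto ?_
    exact tendsto_exp_atBot.comp
      ((tendsto_const_mul_atBot_of_neg (by linarith)).2 tendsto_id)
  have hAcont : Continuous A := continuous_iff_continuousAt.2 fun ξ => (hA ξ).continuousAt
  have hint : IntegrableOn (fun u => A (ξ + u) * A (η + u)) (Ioi 0) := by
    refine integrable_of_isBigO_exp_neg (b := 2 + 2 * ν) (by linarith)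
      (by fun_prop) ?_
    refine ((isBigO_exp_comp_const_add hAO ξ).mul (isBigO_exp_comp_const_add hAO η)).congr_right
      fun u => ?_
    rw [← exp_add]; ring_nf
  have hFTC := integral_Ioi_of_hasDerivAt_of_tendsto'
    (fun u _ => hasDerivAt_exp_mul_wronskian hA hB ξ η u) (hint.const_mul _) hW
  have hne : exp (-2 * ξ) - exp (-2 * η) ≠ 0 := by
    rw [sub_ne_zero, Ne, exp_eq_exp]; contrapose! hξη; linarith
  rw [integral_const_mul] at hFTC
  simp only [mul_zero, add_zero, exp_zero, one_mul] at hFTC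
  rw [div_eq_iff hne]
  linear_combination hFTC

end Wronskian

theorem exp_neg_div_two_rpow (a ξ : ℝ) : (exp (-ξ) / 2) ^ a = exp (-a * ξ) / 2 ^ a := by
  rw [div_rpow (exp_pos _).le zero_le_two, ← exp_mul]
  ring_nf

theorem exp_neg_sq (ξ : ℝ) : exp (-ξ) ^ 2 = exp (-2 * ξ) := by
  rw [← exp_nat_mul]
  ring_nf

noncomputable def besselCoeff (ν : ℝ) (k : ℕ) : ℝ := (-1) ^ k / (k ! * Gamma (ν + k + 1))

noncomputable def besselEntire (ν : ℝ) : ℝ → ℝ := ofScalarsSum (besselCoeff ν)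

noncomputable def besselA (ν ξ : ℝ) : ℝ :=
  exp (-(1 + ν) * ξ) / 2 ^ ν * besselEntire ν (exp (-2 * ξ) / 4)

noncomputable def besselB (ν ξ : ℝ) : ℝ :=
  exp (-(1 + ν) * ξ) / 2 ^ ν * (ν * besselEntire ν (exp (-2 * ξ) / 4)
    + exp (-2 * ξ) / 2 * deriv (besselEntire ν) (exp (-2 * ξ) / 4))

section Bessel

variable {ν : ℝ}

theorem add_natCast_add_one_pos (hν : -1 < ν) (k : ℕ) : 0 < ν + k + 1 := by
  have := k.cast_nonneg (α := ℝ); linarith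

theorem besselCoeff_ne_zero (hν : -1 < ν) (k : ℕ) : besselCoeff ν k ≠ 0 := by
  have := Gamma_pos_of_pos (add_natCast_add_one_pos hν k)
  simp only [besselCoeff]
  positivity

theorem succ_mul_besselCoeff_succ (hν : -1 < ν) (k : ℕ) :
    (k + 1) * (ν + k + 1) * besselCoeff ν (k + 1) = -besselCoeff ν k := by
  have hpos := add_natCast_add_one_pos hν k
  have hΓ : Gamma (ν + (k + 1) + 1) = (ν + k + 1) * Gamma (ν + k + 1) := by
    rw [← add_assoc, Gamma_add_one hpos.ne']
  have := Gamma_pos_of_pos hpos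
  simp only [besselCoeff, Nat.factorial_succ, Nat.cast_mul, Nat.cast_succ, pow_succ, hΓ]
  field_simp

theorem radius_ofScalars_besselCoeff (hν : -1 < ν) :
    (ofScalars ℝ (besselCoeff ν)).radius = ⊤ := by
  refine ofScalars_radius_eq_top_of_tendsto _ _ (.of_forall (besselCoeff_ne_zero hν)) ?_
  have hratio (k : ℕ) :
      ‖besselCoeff ν (k + 1)‖ / ‖besselCoeff ν k‖ = ((k + 1) * (ν + k + 1))⁻¹ := by
    have hν' := add_natCast_add_one_pos hν k
    have hpos : 0 < (k + 1) * (ν + k + 1) := by positivity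
    have h := congrArg norm (succ_mul_besselCoeff_succ hν k)
    rw [norm_neg, norm_mul, Real.norm_of_nonneg hpos.le] at h
    have hc := norm_ne_zero_iff.2 (besselCoeff_ne_zero hν (k + 1))
    rw [← h, div_mul_cancel_right₀ hc]
  simp only [Nat.succ_eq_add_one, hratio]
  refine tendsto_inv_atTop_zero.comp (Tendsto.atTop_mul_atTop₀ ?_ ?_)
  · exact tendsto_atTop_add_const_right _ _ tendsto_natCast_atTop_atTop
  · exact tendsto_atTop_add_const_right _ _
      (tendsto_atTop_add_const_left _ _ tendsto_natCast_atTop_atTop)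

theorem differentiable_besselEntire (hν : -1 < ν) : Differentiable ℝ (besselEntire ν) :=
  differentiable_ofScalarsSum (radius_ofScalars_besselCoeff hν)

theorem differentiable_deriv_besselEntire (hν : -1 < ν) :
    Differentiable ℝ (deriv (besselEntire ν)) := by
  have hc := radius_ofScalars_besselCoeff hν
  rw [besselEntire, deriv_ofScalarsSum hc]
  exact differentiable_ofScalarsSum (radius_ofScalars_derivCoeff hc)

theorem besselEntire_ode (hν : -1 < ν) (t : ℝ) :
    t * deriv (deriv (besselEntire ν)) t + (ν + 1) * deriv (besselEntire ν) t
      + besselEntire ν t = 0 := by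
  have hc := radius_ofScalars_besselCoeff hν
  have hc' := radius_ofScalars_derivCoeff hc
  rw [besselEntire, deriv_ofScalarsSum hc, deriv_ofScalarsSum hc']
  have h0 := hasSum_ofScalarsSum_of_radius_eq_top hc t
  have h1 := hasSum_ofScalarsSum_of_radius_eq_top hc' t
  have h2 := hasSum_ofScalarsSum_of_radius_eq_top (radius_ofScalars_derivCoeff hc') t
  have h2' : HasSum (fun k : ℕ => k * derivCoeff (besselCoeff ν) k * t ^ k)
      (t * ofScalarsSum (derivCoeff (derivCoeff (besselCoeff ν))) t) := by
    rw [← hasSum_nat_add_iff' 1]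
    simpa [derivCoeff, pow_succ, mul_comm, mul_left_comm, mul_assoc, add_assoc, one_add_one_eq_two]
      using h2.mul_left t
  refine (((h2'.add (h1.mul_left (ν + 1))).add h0).unique ?_)
  convert hasSum_zero with k
  simp only [derivCoeff]
  linear_combination t ^ k * succ_mul_besselCoeff_succ hν k

theorem besselJ_eq_rpow_mul_besselEntire {x : ℝ} (hx : 0 < x) :
    besselJ ν x = (x / 2) ^ ν * besselEntire ν (x ^ 2 / 4) := by
  rw [besselJ, besselEntire, ofScalarsSum_eq_tsum, ← tsum_mul_left]
  refine tsum_congr fun k => ?_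
  rw [rpow_add (by positivity), show (2 : ℝ) * k = ((2 * k : ℕ) : ℝ) by push_cast; ring,
    rpow_natCast, pow_mul, besselCoeff, smul_eq_mul]
  ring

theorem hasDerivAt_besselJ (hν : -1 < ν) {x : ℝ} (hx : 0 < x) :
    HasDerivAt (besselJ ν) ((x / 2) ^ ν * (ν / x * besselEntire ν (x ^ 2 / 4)
      + x / 2 * deriv (besselEntire ν) (x ^ 2 / 4))) x := by
  have hev : (fun y => (y / 2) ^ ν * besselEntire ν (y ^ 2 / 4)) =ᶠ[𝓝 x] besselJ ν := by
    filter_upwards [Ioi_mem_nhds hx] with y hy using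
      (besselJ_eq_rpow_mul_besselEntire hy).symm
  have hpow := ((hasDerivAt_id' x).div_const 2).rpow_const (p := ν) (Or.inl (by positivity))
  have hg := (differentiable_besselEntire hν _).hasDerivAt.comp x
    ((hasDerivAt_pow 2 x).div_const 4)
  refine ((hpow.mul hg).congr_of_eventuallyEq hev.symm).congr_deriv ?_
  simp only [Function.comp_apply]
  rw [rpow_sub_one (by positivity)]
  field_simp
  ring

theorem exp_neg_mul_besselJ_exp_neg (ξ : ℝ) :
    exp (-ξ) * besselJ ν (exp (-ξ)) = besselA ν ξ := by
  rw [besselJ_eq_rpow_mul_besselEntire (exp_pos _), exp_neg_div_two_rpow, exp_neg_sq, besselA,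
    show -(1 + ν) * ξ = -ξ + -ν * ξ by ring, exp_add]
  ring

theorem exp_neg_two_mul_deriv_besselJ_exp_neg (hν : -1 < ν) (ξ : ℝ) :
    exp (-2 * ξ) * deriv (besselJ ν) (exp (-ξ)) = besselB ν ξ := by
  rw [(hasDerivAt_besselJ hν (exp_pos _)).deriv, exp_neg_div_two_rpow, exp_neg_sq, besselB,
    show -(1 + ν) * ξ = -ξ + -ν * ξ by ring, exp_add, ← exp_neg_sq]
  field_simp [(exp_pos (-ξ)).ne']

theorem hasDerivAt_comp_exp_neg_two_mul_div_four {f : ℝ → ℝ} (hf : Differentiable ℝ f)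
    (ξ : ℝ) : HasDerivAt (fun ξ => f (exp (-2 * ξ) / 4))
      (-(exp (-2 * ξ) / 2) * deriv f (exp (-2 * ξ) / 4)) ξ :=
  ((hf _).hasDerivAt.comp ξ (((hasDerivAt_id' ξ).const_mul (-2)).exp.div_const 4)).congr_deriv
    (by ring)

theorem hasDerivAt_exp_mul_div (c d ξ : ℝ) :
    HasDerivAt (fun ξ => exp (c * ξ) / d) (c * (exp (c * ξ) / d)) ξ :=
  (((hasDerivAt_id' ξ).const_mul c).exp.div_const d).congr_deriv (by ring)

theorem hasDerivAt_besselA (hν : -1 < ν) (ξ : ℝ) :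
    HasDerivAt (besselA ν) (-besselA ν ξ - besselB ν ξ) ξ := by
  have h := (hasDerivAt_exp_mul_div (-(1 + ν)) (2 ^ ν) ξ).mul
    (hasDerivAt_comp_exp_neg_two_mul_div_four (differentiable_besselEntire hν) ξ)
  refine h.congr_deriv ?_
  simp only [besselA, besselB]
  ring

theorem hasDerivAt_besselB (hν : -1 < ν) (ξ : ℝ) :
    HasDerivAt (besselB ν) ((exp (-2 * ξ) - ν ^ 2) * besselA ν ξ - besselB ν ξ) ξ := by
  have hG := hasDerivAt_comp_exp_neg_two_mul_div_four (differentiable_besselEntire hν) ξ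
  have hG' := hasDerivAt_comp_exp_neg_two_mul_div_four (differentiable_deriv_besselEntire hν) ξ
  have h := (hasDerivAt_exp_mul_div (-(1 + ν)) (2 ^ ν) ξ).mul
    ((hG.const_mul ν).add ((hasDerivAt_exp_mul_div (-2) 2 ξ).mul hG'))
  refine h.congr_deriv ?_
  simp only [besselA, besselB, Pi.add_apply, Pi.mul_apply]
  linear_combination (-(exp (-(1 + ν) * ξ) / 2 ^ ν) * exp (-2 * ξ))
    * besselEntire_ode hν (exp (-2 * ξ) / 4)

theorem isBigO_one_comp_exp_neg_two_mul_div_four {f : ℝ → ℝ} (hf : Continuous f) :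
    (fun ξ => f (exp (-2 * ξ) / 4)) =O[atTop] fun _ => (1 : ℝ) := by
  have hτ : Tendsto (fun ξ => exp (-2 * ξ) / 4) atTop (𝓝 0) := by
    simpa using (tendsto_exp_atBot.comp
      ((tendsto_const_mul_atBot_of_neg (by norm_num : (-2 : ℝ) < 0)).2 tendsto_id)).div_const 4
  exact ((hf.tendsto 0).comp hτ).isBigO_one ℝ

theorem besselA_isBigO (hν : -1 < ν) : besselA ν =O[atTop] fun ξ => exp (-(1 + ν) * ξ) := by
  refine ((isBigO_refl (fun ξ => exp (-(1 + ν) * ξ)) atTop).mul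
    ((isBigO_one_comp_exp_neg_two_mul_div_four
      (differentiable_besselEntire hν).continuous).const_mul_left (2 ^ ν)⁻¹)).congr
    (fun ξ => ?_) fun ξ => mul_one _
  simp only [besselA]
  ring

theorem besselB_sub_isBigO (hν : -1 < ν) :
    (fun ξ => besselB ν ξ - ν * besselA ν ξ) =O[atTop] fun ξ => exp (-(3 + ν) * ξ) := by
  refine ((isBigO_refl (fun ξ => exp (-(3 + ν) * ξ)) atTop).mul
    ((isBigO_one_comp_exp_neg_two_mul_div_four
      (differentiable_deriv_besselEntire hν).continuous).const_mul_left (2 * 2 ^ ν)⁻¹)).congr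
    (fun ξ => ?_) fun ξ => mul_one _
  simp only [besselA, besselB]
  rw [show -(3 + ν) * ξ = -(1 + ν) * ξ + -2 * ξ by ring, exp_add]
  field_simp
  ring

end Bessel

/-- A(ξ) = e^{−ξ}J_ν(e^{−ξ}), B(ξ) = e^{−2ξ}J_ν'(e^{−ξ}) satisfy the first-order system
A' = −A − B, B' = (e^{−2ξ} − ν²)A − B, and the Bessel kernel in exponential coordinates
is the square of the Hankel operator with symbol A. -/
theorem stmt12 (ν : ℝ) (hν : -1/2 < ν) (A B : ℝ → ℝ)
    (hA : ∀ ξ, A ξ = Real.exp (-ξ) * besselJ ν (Real.exp (-ξ)))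
    (hB : ∀ ξ, B ξ = Real.exp (-2 * ξ) * deriv (besselJ ν) (Real.exp (-ξ))) :
    (∀ ξ, deriv A ξ = -A ξ - B ξ) ∧
    (∀ ξ, deriv B ξ = (Real.exp (-2 * ξ) - ν ^ 2) * A ξ - B ξ) ∧
    ∀ ξ η : ℝ, ξ ≠ η →
      (A ξ * B η - A η * B ξ) / (Real.exp (-2 * ξ) - Real.exp (-2 * η))
        = ∫ u in Set.Ioi (0:ℝ), A (ξ + u) * A (η + u) := by
  have hν' : -1 < ν := by linarith
  obtain rfl : A = besselA ν := funext fun ξ => (hA ξ).trans (exp_neg_mul_besselJ_exp_neg ξ)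
  obtain rfl : B = besselB ν :=
    funext fun ξ => (hB ξ).trans (exp_neg_two_mul_deriv_besselJ_exp_neg hν' ξ)
  exact ⟨fun ξ => (hasDerivAt_besselA hν' ξ).deriv, fun ξ => (hasDerivAt_besselB hν' ξ).deriv,
    fun ξ η => wronskian_div_eq_integral (hasDerivAt_besselA hν') (hasDerivAt_besselB hν') hν'
      (besselA_isBigO hν') (besselB_sub_isBigO hν')⟩
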